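/- arXiv:1310.6286 — 2 statements merged into one kernel-verified Lean document; each statement's English description precedes it below -/
import Mathlib

section
/- Let (Ω, F, P) be a probability space with filtration F_t = σ({T ≤ s} : s ≤ t) ∨ σ(Z·1_{T ≤ s} : s ≤ t) generated by a single jump time T taking values in [0,∞] and mark Z in a measurable space E. If τ is a stopping time for this filtration, then there exists a constant t₀ ∈ [0,∞] such that τ ∧ T = t₀ ∧ T almost surely. -/
open MeasureTheory ENNReal

/-- For the natural filtration of a single jump at time `T` with mark `Z`
(generated by the events `{T ≤ s, Z ∈ A}` for `s ≤ t`), every stopping time `τ`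
satisfies `τ ∧ T = t₀ ∧ T` a.s. for some constant `t₀ ∈ [0,∞]`. -/
theorem stmt6 {Ω E : Type*} [MeasurableSpace Ω] [MeasurableSpace E]
    (P : Measure Ω) [IsProbabilityMeasure P]
    (T : Ω → ℝ≥0∞) (Z : Ω → E) (hT : Measurable T) (hZ : Measurable Z)
    (F : ℝ≥0∞ → MeasurableSpace Ω)
    (hF : ∀ t, F t = MeasurableSpace.generateFrom
      {S : Set Ω | ∃ s ≤ t, ∃ A : Set E, MeasurableSet A ∧ S = {ω | T ω ≤ s ∧ Z ω ∈ A}})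
    (τ : Ω → ℝ≥0∞)
    (hτ : ∀ t, MeasurableSet[F t] {ω | τ ω ≤ t}) :
    ∃ t₀ : ℝ≥0∞, ∀ᵐ ω ∂P, min (τ ω) (T ω) = min t₀ (T ω) := by
  classical
  -- Dichotomy: for each `t`, either every ω with `t < T ω` has `τ ω ≤ t`,
  -- or every ω with `τ ω ≤ t` has `T ω ≤ t`.
  have dich : ∀ t : ℝ≥0∞,
      ({ω | t < T ω} ⊆ {ω | τ ω ≤ t}) ∨ (∀ ω ∈ {ω | τ ω ≤ t}, ¬ t < T ω) := by
    intro t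
    have h := hτ t
    rw [hF t] at h
    refine MeasurableSpace.generateFrom_induction _
      (fun S _ => ({ω | t < T ω} ⊆ S) ∨ (∀ ω ∈ S, ¬ t < T ω)) ?_ ?_ ?_ ?_ _ h
    · rintro S ⟨s, hst, A, -, rfl⟩ -
      right
      rintro ω ⟨h1, -⟩ h2
      exact absurd (h1.trans hst) (not_le.mpr h2)
    · right; rintro ω ⟨⟩
    · rintro S - (h1 | h2)
      · right; exact fun ω hω ht => hω (h1 ht)
      · left; exact fun ω hω => fun hS => h2 ω hS hω
    · intro f hmf hf
      by_cases hall : ∀ n, ∀ ω ∈ f n, ¬ t < T ω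
      · right
        rintro ω hω ht
        obtain ⟨n, hn⟩ := Set.mem_iUnion.mp hω
        exact hall n ω hn ht
      · push_neg at hall
        obtain ⟨n, hn⟩ := hall
        rcases hf n with h1 | h2
        · left; exact h1.trans (Set.subset_iUnion f n)
        · exact absurd h2 (by push_neg; exact hn)
  set s : Set ℝ≥0∞ := {t | ∀ ω, t < T ω → τ ω ≤ t} with hs
  set t₀ : ℝ≥0∞ := sInf s with ht₀
  have hnotmem : ∀ t ∉ s, ∀ ω, t < T ω → t < τ ω := by
    intro t ht ω hω
    rcases dich t with h1 | h2
    · exact absurd (fun ω' hω' => h1 hω') ht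
    · by_contra hc
      exact h2 ω (not_lt.mp hc) hω
  have hmem : ∀ b, t₀ < b → b ∈ s := by
    intro b hb
    obtain ⟨a, ha, hab⟩ := sInf_lt_iff.mp hb
    exact fun ω hω => (ha ω (hab.le.trans_lt hω)).trans hab.le
  refine ⟨t₀, Filter.Eventually.of_forall fun ω => ?_⟩
  rcases le_or_gt (T ω) t₀ with hle | hlt
  · -- T ω ≤ t₀ : both mins equal T ω
    have hτT : T ω ≤ τ ω := by
      by_contra hc
      push_neg at hc
      have h1 : τ ω < t₀ := hc.trans_le hle
      have h2 : τ ω ∉ s := fun h => absurd (sInf_le h) (not_le.mpr h1)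
      exact absurd (hnotmem _ h2 ω hc) (lt_irrefl _)
    rw [min_eq_right hτT, min_eq_right hle]
  · -- t₀ < T ω : show τ ω = t₀
    have h1 : τ ω ≤ t₀ := by
      by_contra hc
      push_neg at hc
      obtain ⟨c, hc1, hc2⟩ := exists_between (lt_min hc hlt)
      exact absurd ((hmem c hc1) ω (hc2.trans_le (min_le_right _ _)))
        (not_le.mpr (hc2.trans_le (min_le_left _ _)))
    have h2 : t₀ ≤ τ ω := by
      by_contra hc
      push_neg at hc
      have h3 : τ ω ∉ s := fun h => absurd (sInf_le h) (not_le.mpr hc)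
      exact absurd (hnotmem _ h3 ω (hc.trans hlt)) (lt_irrefl _)
    rw [le_antisymm h1 h2]
end

section
/- Let F : [0,∞) → (0,∞) be a right-continuous decreasing function of bounded variation with left limits F_{s−}, and let dF denote its Lebesgue–Stieltjes (signed, nonpositive) measure. Then for 0 < u ≤ t, −∫_{[u,t]} (F_s F_{s−})^{-1} dF_s = 1/F_t − 1/F_{u−}. -/
/-!
The measure `dG = -dF` satisfies `(F_s F_{s-})⁻¹ dG_s = d(1/F)_s`, which is the claim.
Put `H = 1/F`. Stieltjes integration by parts for `G = -F` and `H`, whose product is the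
constant `-1`, gives `∫_{(a,b]} H_{s-} dG_s = ∫_{(a,b]} F_s dH_s` on every interval, i.e.
`H_- dG = F dH` as measures. Multiplying both densities by `1/F = H` gives
`(F F_-)⁻¹ dG = dH`, and `dH([u,t]) = H_t - H_{u-}`.

Integration by parts itself is Fubini for `dG ⊗ dH` on the square `(a,b]²`, cut along
the diagonal.
-/

open MeasureTheory Function Set

theorem lintegral_measure_Iio_inter_add_lintegral_measure_Iic_inter {α : Type*}
    [TopologicalSpace α] [LinearOrder α] [OrderClosedTopology α] [SecondCountableTopology α]
    [MeasurableSpace α] [OpensMeasurableSpace α] (μ ν : Measure α) [SFinite μ] [SFinite ν]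
    (s : Set α) :
    ∫⁻ x in s, ν (Iio x ∩ s) ∂μ + ∫⁻ y in s, μ (Iic y ∩ s) ∂ν = μ s * ν s := by
  have hlt : MeasurableSet {p : α × α | p.2 < p.1} :=
    measurableSet_lt measurable_snd measurable_fst
  have hbelow : ∫⁻ x in s, ν (Iio x ∩ s) ∂μ
      = ((μ.restrict s).prod (ν.restrict s)) {p | p.2 < p.1} := by
    rw [Measure.prod_apply hlt]
    exact lintegral_congr fun x => (Measure.restrict_apply measurableSet_Iio).symm
  have habove : ∫⁻ y in s, μ (Iic y ∩ s) ∂ν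
      = ((μ.restrict s).prod (ν.restrict s)) {p | p.2 < p.1}ᶜ := by
    rw [Measure.prod_apply_symm hlt.compl]
    refine lintegral_congr fun y => ?_
    have hslice : (fun x => (x, y)) ⁻¹' {p : α × α | p.2 < p.1}ᶜ = Iic y := by ext; simp
    rw [hslice, Measure.restrict_apply measurableSet_Iic]
  rw [hbelow, habove, measure_add_measure_compl hlt, ← univ_prod_univ, Measure.prod_prod,
    Measure.restrict_apply_univ, Measure.restrict_apply_univ]

theorem Monotone.integrableOn_Ioc {f : ℝ → ℝ} (hf : Monotone f) (μ : Measure ℝ)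
    [IsLocallyFiniteMeasure μ] (a b : ℝ) : IntegrableOn f (Ioc a b) μ :=
  (hf.locallyIntegrable.integrableOn_isCompact isCompact_Icc).mono_set Ioc_subset_Icc_self

namespace StieltjesFunction

theorem measureReal_Ioc (f : StieltjesFunction ℝ) {a b : ℝ} (hab : a ≤ b) :
    f.measure.real (Ioc a b) = f b - f a := by
  rw [measureReal_def, f.measure_Ioc, ENNReal.toReal_ofReal (sub_nonneg.2 (f.mono hab))]

theorem lintegral_Ioc_leftLim_sub_add_lintegral_Ioc_sub (f g : StieltjesFunction ℝ) (a b : ℝ) :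
    ∫⁻ x in Ioc a b, ENNReal.ofReal (leftLim g x - g a) ∂f.measure
      + ∫⁻ y in Ioc a b, ENNReal.ofReal (f y - f a) ∂g.measure
      = ENNReal.ofReal (f b - f a) * ENNReal.ofReal (g b - g a) := by
  have hIoo : ∀ x ∈ Ioc a b,
      g.measure (Iio x ∩ Ioc a b) = ENNReal.ofReal (leftLim g x - g a) := by
    intro x hx
    have hset : Iio x ∩ Ioc a b = Ioo a x := by
      ext z
      simp only [mem_inter_iff, mem_Iio, mem_Ioc, mem_Ioo]
      exact ⟨fun h => ⟨h.2.1, h.1⟩, fun h => ⟨h.2, h.1, h.2.le.trans hx.2⟩⟩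
    rw [hset, g.measure_Ioo]
  have hIoc : ∀ y ∈ Ioc a b, f.measure (Iic y ∩ Ioc a b) = ENNReal.ofReal (f y - f a) := by
    intro y hy
    have hset : Iic y ∩ Ioc a b = Ioc a y := by
      ext z
      simp only [mem_inter_iff, mem_Iic, mem_Ioc]
      exact ⟨fun h => ⟨h.2.1, h.1⟩, fun h => ⟨h.2, h.1, h.2.trans hy.2⟩⟩
    rw [hset, f.measure_Ioc]
  rw [← setLIntegral_congr_fun measurableSet_Ioc hIoo,
    ← setLIntegral_congr_fun measurableSet_Ioc hIoc, ← f.measure_Ioc, ← g.measure_Ioc]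
  exact lintegral_measure_Iio_inter_add_lintegral_measure_Iic_inter _ _ _

theorem integral_Ioc_leftLim_add_integral_Ioc (f g : StieltjesFunction ℝ) {a b : ℝ}
    (hab : a ≤ b) :
    ∫ x in Ioc a b, leftLim g x ∂f.measure + ∫ x in Ioc a b, f x ∂g.measure
      = f b * g b - f a * g a := by
  have hg_int : IntegrableOn (fun x => leftLim g x - g a) (Ioc a b) f.measure :=
    (g.mono.leftLim.integrableOn_Ioc _ a b).sub (integrableOn_const (by simp))
  have hf_int : IntegrableOn (fun x => f x - f a) (Ioc a b) g.measure :=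
    (f.mono.integrableOn_Ioc _ a b).sub (integrableOn_const (by simp))
  have hg_nonneg : 0 ≤ᵐ[f.measure.restrict (Ioc a b)] fun x => leftLim g x - g a :=
    (ae_restrict_mem measurableSet_Ioc).mono fun x hx => sub_nonneg.2 (g.mono.le_leftLim hx.1)
  have hf_nonneg : 0 ≤ᵐ[g.measure.restrict (Ioc a b)] fun x => f x - f a :=
    (ae_restrict_mem measurableSet_Ioc).mono fun x hx => sub_nonneg.2 (f.mono hx.1.le)
  have hfab : 0 ≤ f b - f a := sub_nonneg.2 (f.mono hab)
  have hgab : 0 ≤ g b - g a := sub_nonneg.2 (g.mono hab)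
  have hshifted : ∫ x in Ioc a b, (leftLim g x - g a) ∂f.measure
      + ∫ x in Ioc a b, (f x - f a) ∂g.measure = (f b - f a) * (g b - g a) := by
    rw [← ENNReal.ofReal_eq_ofReal_iff
        (add_nonneg (integral_nonneg_of_ae hg_nonneg) (integral_nonneg_of_ae hf_nonneg))
        (mul_nonneg hfab hgab),
      ENNReal.ofReal_add (integral_nonneg_of_ae hg_nonneg) (integral_nonneg_of_ae hf_nonneg),
      ofReal_integral_eq_lintegral_ofReal hg_int hg_nonneg,
      ofReal_integral_eq_lintegral_ofReal hf_int hf_nonneg, ENNReal.ofReal_mul hfab]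
    exact lintegral_Ioc_leftLim_sub_add_lintegral_Ioc_sub f g a b
  rw [integral_sub (g.mono.leftLim.integrableOn_Ioc _ a b) (integrableOn_const (by simp)),
    integral_sub (f.mono.integrableOn_Ioc _ a b) (integrableOn_const (by simp)),
    setIntegral_const, setIntegral_const, f.measureReal_Ioc hab, g.measureReal_Ioc hab,
    smul_eq_mul, smul_eq_mul] at hshifted
  linarith

/-- For `F = -G` this is `1 / F`. -/
noncomputable def negInv (G : StieltjesFunction ℝ) (hG : ∀ x, G x < 0) :
    StieltjesFunction ℝ where
  toFun x := -(G x)⁻¹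
  mono' _ _ hxy := neg_le_neg ((inv_le_inv_of_neg (hG _) (hG _)).2 (G.mono hxy))
  right_continuous' x := ((G.right_continuous x).inv₀ (hG x).ne).neg

variable (G : StieltjesFunction ℝ) (hG : ∀ x, G x < 0)

theorem negInv_apply (x : ℝ) : G.negInv hG x = -(G x)⁻¹ := rfl

include hG in
theorem leftLim_lt_zero (x : ℝ) : leftLim G x < 0 :=
  (G.mono.leftLim_le le_rfl).trans_lt (hG x)

theorem leftLim_negInv (x : ℝ) : leftLim (G.negInv hG) x = -(leftLim G x)⁻¹ :=
  leftLim_eq_of_tendsto ((G.mono.tendsto_leftLim x).inv₀ (G.leftLim_lt_zero hG x).ne).neg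

theorem withDensity_leftLim_negInv :
    G.measure.withDensity (fun x => ENNReal.ofReal (leftLim (G.negInv hG) x))
      = (G.negInv hG).measure.withDensity (fun x => ENNReal.ofReal (-G x)) := by
  set H := G.negInv hG
  have hIoc : ∀ a b, a ≤ b →
      ∫ x in Ioc a b, leftLim H x ∂G.measure = ∫ x in Ioc a b, -G x ∂H.measure := by
    intro a b hab
    have hparts := G.integral_Ioc_leftLim_add_integral_Ioc H hab
    simp only [H, negInv_apply, mul_neg, mul_inv_cancel₀ (hG _).ne, sub_self] at hparts
    rw [integral_neg]
    linarith
  have hG_lintegral : ∀ a b, ∫⁻ x in Ioc a b, ENNReal.ofReal (leftLim H x) ∂G.measure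
      = ENNReal.ofReal (∫ x in Ioc a b, leftLim H x ∂G.measure) := fun a b =>
    (ofReal_integral_eq_lintegral_ofReal (H.mono.leftLim.integrableOn_Ioc _ a b)
      (Filter.Eventually.of_forall fun x => by
        simp [H, leftLim_negInv, (G.leftLim_lt_zero hG x).le])).symm
  have hH_lintegral : ∀ a b, ∫⁻ x in Ioc a b, ENNReal.ofReal (-G x) ∂H.measure
      = ENNReal.ofReal (∫ x in Ioc a b, -G x ∂H.measure) := fun a b =>
    (ofReal_integral_eq_lintegral_ofReal (G.mono.integrableOn_Ioc _ a b).neg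
      (Filter.Eventually.of_forall fun x => by simp [(hG x).le])).symm
  refine Measure.ext_of_Ioc' _ _ (fun a b _ => ?_) (fun a b hab => ?_)
  · rw [withDensity_apply _ measurableSet_Ioc, hG_lintegral]
    exact ENNReal.ofReal_ne_top
  · rw [withDensity_apply _ measurableSet_Ioc, withDensity_apply _ measurableSet_Ioc,
      hG_lintegral, hH_lintegral, hIoc a b hab.le]

theorem withDensity_inv_mul_leftLim :
    G.measure.withDensity (fun x => ENNReal.ofReal (G x * leftLim G x)⁻¹)
      = (G.negInv hG).measure := by
  set H := G.negInv hG
  have hsplit : (fun x => ENNReal.ofReal (G x * leftLim G x)⁻¹)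
      = (fun x => ENNReal.ofReal (leftLim H x)) * fun x => ENNReal.ofReal (H x) := by
    ext x
    simp only [Pi.mul_apply, H, leftLim_negInv, negInv_apply]
    rw [← ENNReal.ofReal_mul (by simp [(G.leftLim_lt_zero hG x).le])]
    congr 1
    ring
  have hcancel : (fun x => ENNReal.ofReal (-G x)) * (fun x => ENNReal.ofReal (H x)) = 1 := by
    ext x
    simp only [Pi.mul_apply, H, negInv_apply, Pi.one_apply]
    rw [← ENNReal.ofReal_mul (by simp [(hG x).le]), neg_mul_neg, mul_inv_cancel₀ (hG x).ne,
      ENNReal.ofReal_one]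
  rw [hsplit, withDensity_mul _ H.mono.leftLim.measurable.ennreal_ofReal
      H.mono.measurable.ennreal_ofReal, withDensity_leftLim_negInv,
    ← withDensity_mul (f := fun x => ENNReal.ofReal (-G x)) _
      G.mono.measurable.neg.ennreal_ofReal H.mono.measurable.ennreal_ofReal,
    hcancel, withDensity_one]

include hG in
theorem integral_Icc_inv_mul_leftLim {u t : ℝ} (hut : u ≤ t) :
    ∫ s in Icc u t, (G s * leftLim G s)⁻¹ ∂G.measure = (leftLim G u)⁻¹ - (G t)⁻¹ := by
  have hnonneg : 0 ≤ᵐ[G.measure.restrict (Icc u t)] fun s => (G s * leftLim G s)⁻¹ :=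
    Filter.Eventually.of_forall fun s =>
      inv_nonneg.2 (mul_nonneg_of_nonpos_of_nonpos (hG s).le (G.leftLim_lt_zero hG s).le)
  have hmeas : AEStronglyMeasurable (fun s => (G s * leftLim G s)⁻¹)
      (G.measure.restrict (Icc u t)) :=
    (G.mono.measurable.mul G.mono.leftLim.measurable).inv.aestronglyMeasurable
  have hle : leftLim (G.negInv hG) u ≤ G.negInv hG t := (G.negInv hG).mono.leftLim_le hut
  rw [integral_eq_lintegral_of_nonneg_ae hnonneg hmeas, ← withDensity_apply _ measurableSet_Icc,
    G.withDensity_inv_mul_leftLim hG, measure_Icc, ENNReal.toReal_ofReal (sub_nonneg.2 hle),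
    negInv_apply, leftLim_negInv]
  ring

end StieltjesFunction

theorem stmt14_general (F : ℝ → ℝ) (hFpos : ∀ s, 0 < F s)
    (G : StieltjesFunction ℝ) (hG : ∀ x, G x = -F x)
    (u t : ℝ) (hut : u ≤ t) :
    ∫ s in Icc u t, (F s * leftLim F s)⁻¹ ∂G.measure
      = 1 / F t - 1 / leftLim F u := by
  have hF : ∀ x, F x = -G x := fun x => by rw [hG, neg_neg]
  have hG_neg : ∀ x, G x < 0 := fun x => by simpa [hG] using hFpos x
  have hF_leftLim : ∀ x, leftLim F x = -leftLim G x := fun x =>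
    funext hF ▸ leftLim_eq_of_tendsto (G.mono.tendsto_leftLim x).neg
  simp_rw [hF_leftLim, hF, neg_mul_neg, G.integral_Icc_inv_mul_leftLim hG_neg hut]
  ring

/-- Stieltjes change-of-variables identity: for a strictly positive, right-continuous
decreasing function `F` of bounded variation (right continuity and bounded variation are
encoded by the Stieltjes function `G = -F`, so that `dG = -dF` where
`dF([a,b]) = F_b - F_{a-}`), one has, for `0 < u ≤ t`,
`-∫_{[u,t]} (F_s F_{s-})⁻¹ dF_s = 1/F_t - 1/F_{u-}`. -/
theorem stmt14 (F : ℝ → ℝ) (hFanti : Antitone F) (hFpos : ∀ s, 0 < F s)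
    (G : StieltjesFunction ℝ) (hG : ∀ x, G x = -F x)
    (u t : ℝ) (hu : 0 < u) (hut : u ≤ t) :
    ∫ s in Icc u t, (F s * leftLim F s)⁻¹ ∂G.measure
      = 1 / F t - 1 / leftLim F u :=
  stmt14_general F hFpos G hG u t hut
end
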